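/- If T is a theory containing HA that is closed under the rule Σ_{k+1}-DNE-R (from T ⊢ ¬¬φ infer T ⊢ φ for φ ∈ Σ_{k+1}), then T proves Σ_k-LEM. -/

import Mathlib

namespace SemiClassicalArith

/-- Terms of arithmetic: variables (de Bruijn indices) and function symbols
(one symbol of each arity for every code, covering all primitive recursive functions). -/
inductive Term : Type
  | var : ℕ → Term
  | func : (code : ℕ) → (arity : ℕ) → (Fin arity → Term) → Term

namespace Term

/-- Shift all variables `≥ d` up by one. -/
def lift (d : ℕ) : Term → Term
  | var n => if n < d then var n else var (n + 1)
  | func c a ts => func c a fun i => (ts i).lift d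

/-- Binder-removing substitution of `s` for variable `k`. -/
def subst (k : ℕ) (s : Term) : Term → Term
  | var n => if n < k then var n else if n = k then s else var (n - 1)
  | func c a ts => func c a fun i => Term.subst k s (ts i)

/-- In-place replacement of variable `k` by `s` (no shifting of other variables). -/
def repl (k : ℕ) (s : Term) : Term → Term
  | var n => if n = k then s else var n
  | func c a ts => func c a fun i => Term.repl k s (ts i)

/-- Free variables of a term. -/
def fv : Term → Finset ℕ
  | var n => {n}
  | func _ _ ts => Finset.univ.sup fun i => (ts i).fv

/-- The constant zero (function symbol of arity 0, code 0). -/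
def zero : Term := func 0 0 (fun i => i.elim0)

/-- Successor (function symbol of arity 1, code 1). -/
def succ (t : Term) : Term := func 1 1 (fun _ => t)

end Term

/-- Formulas of arithmetic in the language with an extra nullary predicate
symbol `$` (`dollar`), used as a place holder. Quantifiers use de Bruijn indices. -/
inductive Formula : Type
  | falsum : Formula
  | dollar : Formula
  | eq : Term → Term → Formula
  | and : Formula → Formula → Formula
  | or : Formula → Formula → Formula
  | imp : Formula → Formula → Formula
  | all : Formula → Formula
  | ex : Formula → Formula

namespace Formula

def neg (φ : Formula) : Formula := φ.imp falsum

def iff (φ ψ : Formula) : Formula := (φ.imp ψ).and (ψ.imp φ)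

/-- `¬_$ φ`, i.e. `φ → $`. -/
def negD (φ : Formula) : Formula := φ.imp dollar

def lift (d : ℕ) : Formula → Formula
  | falsum => falsum
  | dollar => dollar
  | eq t u => eq (t.lift d) (u.lift d)
  | and φ ψ => and (φ.lift d) (ψ.lift d)
  | or φ ψ => or (φ.lift d) (ψ.lift d)
  | imp φ ψ => imp (φ.lift d) (ψ.lift d)
  | all φ => all (φ.lift (d + 1))
  | ex φ => ex (φ.lift (d + 1))

/-- Binder-removing substitution of term `s` for variable `k`. -/
def subst (k : ℕ) (s : Term) : Formula → Formula
  | falsum => falsum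
  | dollar => dollar
  | eq t u => eq (Term.subst k s t) (Term.subst k s u)
  | and φ ψ => and (Formula.subst k s φ) (Formula.subst k s ψ)
  | or φ ψ => or (Formula.subst k s φ) (Formula.subst k s ψ)
  | imp φ ψ => imp (Formula.subst k s φ) (Formula.subst k s ψ)
  | all φ => all (Formula.subst (k + 1) (s.lift 0) φ)
  | ex φ => ex (Formula.subst (k + 1) (s.lift 0) φ)

/-- In-place replacement of variable `k` by term `s`. -/
def repl (k : ℕ) (s : Term) : Formula → Formula
  | falsum => falsum
  | dollar => dollar
  | eq t u => eq (Term.repl k s t) (Term.repl k s u)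
  | and φ ψ => and (Formula.repl k s φ) (Formula.repl k s ψ)
  | or φ ψ => or (Formula.repl k s φ) (Formula.repl k s ψ)
  | imp φ ψ => imp (Formula.repl k s φ) (Formula.repl k s ψ)
  | all φ => all (Formula.repl (k + 1) (s.lift 0) φ)
  | ex φ => ex (Formula.repl (k + 1) (s.lift 0) φ)

/-- Free variables of a formula. -/
def fv : Formula → Finset ℕ
  | falsum => ∅
  | dollar => ∅
  | eq t u => t.fv ∪ u.fv
  | and φ ψ => φ.fv ∪ ψ.fv
  | or φ ψ => φ.fv ∪ ψ.fv
  | imp φ ψ => φ.fv ∪ ψ.fv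
  | all φ => (φ.fv.erase 0).image (· - 1)
  | ex φ => (φ.fv.erase 0).image (· - 1)

/-- A sentence is a formula with no free variables. -/
def sentence (φ : Formula) : Prop := φ.fv = ∅

/-- The formula is in the language of `HA` (the placeholder `$` does not occur). -/
def noDollar : Formula → Prop
  | falsum => True
  | dollar => False
  | eq _ _ => True
  | and φ ψ => φ.noDollar ∧ ψ.noDollar
  | or φ ψ => φ.noDollar ∧ ψ.noDollar
  | imp φ ψ => φ.noDollar ∧ ψ.noDollar
  | all φ => φ.noDollar
  | ex φ => φ.noDollar

/-- Quantifier-free formula of `HA`. -/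
def isQF : Formula → Prop
  | falsum => True
  | dollar => False
  | eq _ _ => True
  | and φ ψ => φ.isQF ∧ ψ.isQF
  | or φ ψ => φ.isQF ∧ ψ.isQF
  | imp φ ψ => φ.isQF ∧ ψ.isQF
  | all _ => False
  | ex _ => False

/-- Flip `+`/`-` in an alternation path (`true` = `+`, `false` = `-`). -/
def pflip (s : List Bool) : List Bool := s.map (!·)

/-- The set of alternation paths of a formula (Akama–Berardi–Hayashi–Kohlenbach). -/
def alt : Formula → Finset (List Bool)
  | falsum => {([] : List Bool)}
  | dollar => {([] : List Bool)}
  | eq _ _ => {([] : List Bool)}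
  | and φ ψ => φ.alt ∪ ψ.alt
  | or φ ψ => φ.alt ∪ ψ.alt
  | imp φ ψ => φ.alt.image pflip ∪ ψ.alt
  | all φ => φ.alt.image (fun s => if s.head? = some false then s else false :: s)
  | ex φ => φ.alt.image (fun s => if s.head? = some true then s else true :: s)

/-- The degree of a formula: the maximal length of its alternation paths. -/
def degree (φ : Formula) : ℕ := φ.alt.sup List.length

/-- The class `U_k` (for `k ≥ 1`: degree `k` and all maximal paths begin with `-`;
`U_0` is the class of degree-`0` formulas). -/
def inU (k : ℕ) (φ : Formula) : Prop :=
  φ.degree = k ∧ ∀ s ∈ φ.alt, s.length = k → k = 0 ∨ s.head? = some false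

/-- The class `E_k` (for `k ≥ 1`: degree `k` and all maximal paths begin with `+`;
`E_0` is the class of degree-`0` formulas). -/
def inE (k : ℕ) (φ : Formula) : Prop :=
  φ.degree = k ∧ ∀ s ∈ φ.alt, s.length = k → k = 0 ∨ s.head? = some true

/-- The dual of a prenex formula: swap quantifiers and negate the matrix. -/
def dual : Formula → Formula
  | all φ => ex φ.dual
  | ex φ => all φ.dual
  | φ => φ.neg

/-- The `$`-translation (Ishihara's generalized negative translation). -/
def dollarTr : Formula → Formula
  | falsum => dollar
  | dollar => dollar
  | eq t u => (eq t u).negD.negD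
  | and φ ψ => and φ.dollarTr ψ.dollarTr
  | or φ ψ => (or φ.dollarTr ψ.dollarTr).negD.negD
  | imp φ ψ => imp φ.dollarTr ψ.dollarTr
  | all φ => all φ.dollarTr
  | ex φ => (ex φ.dollarTr).negD.negD

/-- The Friedman A-translation: replace every prime formula `P` (including `⊥`)
by `P ∨ *` (here `*` is the placeholder `dollar`). -/
def aTr : Formula → Formula
  | falsum => or falsum dollar
  | dollar => dollar
  | eq t u => or (eq t u) dollar
  | and φ ψ => and φ.aTr ψ.aTr
  | or φ ψ => or φ.aTr ψ.aTr
  | imp φ ψ => imp φ.aTr ψ.aTr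
  | all φ => all φ.aTr
  | ex φ => ex φ.aTr

/-- Prefix `n` universal quantifiers. -/
def allN : Formula → ℕ → Formula
  | φ, 0 => φ
  | φ, n + 1 => Formula.allN φ.all n

/-- The universal closure of a formula. -/
def univClosure (φ : Formula) : Formula := φ.allN (φ.fv.sup Nat.succ)

end Formula

mutual
  /-- The class `Σ_k` of prenex formulas. -/
  inductive IsSigma : ℕ → Formula → Prop
    | qf {φ : Formula} : φ.isQF → IsSigma 0 φ
    | ofPi {k : ℕ} {φ : Formula} : IsPi k φ → IsSigma (k + 1) φ
    | ex {k : ℕ} {φ : Formula} : IsSigma (k + 1) φ → IsSigma (k + 1) φ.ex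
  /-- The class `Π_k` of prenex formulas. -/
  inductive IsPi : ℕ → Formula → Prop
    | qf {φ : Formula} : φ.isQF → IsPi 0 φ
    | ofSigma {k : ℕ} {φ : Formula} : IsSigma k φ → IsPi (k + 1) φ
    | all {k : ℕ} {φ : Formula} : IsPi (k + 1) φ → IsPi (k + 1) φ.all
end

/-- Axioms of Heyting arithmetic `HA` (Hilbert style intuitionistic predicate logic
with equality, plus arithmetical axioms and the induction scheme). -/
inductive HAAx : Formula → Prop
  | axK (φ ψ : Formula) : HAAx (φ.imp (ψ.imp φ))
  | axS (φ ψ χ : Formula) : HAAx ((φ.imp (ψ.imp χ)).imp ((φ.imp ψ).imp (φ.imp χ)))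
  | andI (φ ψ : Formula) : HAAx (φ.imp (ψ.imp (φ.and ψ)))
  | andE1 (φ ψ : Formula) : HAAx ((φ.and ψ).imp φ)
  | andE2 (φ ψ : Formula) : HAAx ((φ.and ψ).imp ψ)
  | orI1 (φ ψ : Formula) : HAAx (φ.imp (φ.or ψ))
  | orI2 (φ ψ : Formula) : HAAx (ψ.imp (φ.or ψ))
  | orE (φ ψ χ : Formula) : HAAx ((φ.imp χ).imp ((ψ.imp χ).imp ((φ.or ψ).imp χ)))
  | efq (φ : Formula) : HAAx (Formula.falsum.imp φ)
  | allE (φ : Formula) (t : Term) : HAAx (φ.all.imp (φ.subst 0 t))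
  | exI (φ : Formula) (t : Term) : HAAx ((φ.subst 0 t).imp φ.ex)
  | allK (φ ψ : Formula) : HAAx ((φ.imp ψ).all.imp (φ.all.imp ψ.all))
  | allVac (φ : Formula) : HAAx (φ.imp (φ.lift 0).all)
  | exE (φ ψ : Formula) : HAAx ((φ.imp (ψ.lift 0)).all.imp (φ.ex.imp ψ))
  | eqRefl (t : Term) : HAAx (Formula.eq t t)
  | eqSubst (t u : Term) (φ : Formula) : HAAx ((Formula.eq t u).imp ((φ.subst 0 t).imp (φ.subst 0 u)))
  | succNeZero (t : Term) : HAAx (Formula.neg (Formula.eq (Term.succ t) Term.zero))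
  | succInj (t u : Term) : HAAx ((Formula.eq (Term.succ t) (Term.succ u)).imp (Formula.eq t u))
  | ind (φ : Formula) : HAAx ((φ.subst 0 Term.zero).imp
      ((((φ.imp (φ.repl 0 (Term.succ (Term.var 0))))).all).imp φ.all))
  | atomDec (t u : Term) : HAAx ((Formula.eq t u).or (Formula.eq t u).neg)

/-- Provability from `HA` (in the language possibly containing `$`)
together with the extra axioms `T`. -/
inductive Proves (T : Set Formula) : Formula → Prop
  | ax {φ : Formula} : φ ∈ T → Proves T φ
  | ha {φ : Formula} : HAAx φ → Proves T φ
  | mp {φ ψ : Formula} : Proves T (φ.imp ψ) → Proves T φ → Proves T ψ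
  | gen {φ : Formula} : Proves T φ → Proves T φ.all

/-- The scheme `Σ_k-LEM`. -/
def sigLEM (k : ℕ) : Set Formula := {ψ | ∃ φ : Formula, IsSigma k φ ∧ ψ = φ.or φ.neg}

/-- The full law of excluded middle for `HA`-formulas; `Proves lemSet` is `PA`-provability. -/
def lemSet : Set Formula := {ψ | ∃ φ : Formula, φ.noDollar ∧ ψ = φ.or φ.neg}

/-- The scheme `F_k-LEM`: excluded middle for `HA`-formulas of degree at most `k`. -/
def fLEM (k : ℕ) : Set Formula :=
  {ψ | ∃ φ : Formula, φ.noDollar ∧ φ.degree ≤ k ∧ ψ = φ.or φ.neg}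

/-- `T` is (the set of extra axioms of) a semi-classical arithmetic:
`HA ⊆ HA + T ⊆ PA`, i.e. all axioms are `HA`-formulas provable in `PA`. -/
def IsSemiClassical (T : Set Formula) : Prop :=
  ∀ φ ∈ T, φ.noDollar ∧ Proves lemSet φ

mutual
  /-- The class `ℛ_{k+1}` (index `k` denotes `ℛ_{k+1}`). -/
  inductive Rcl : ℕ → Formula → Prop
    | base {k : ℕ} {φ : Formula} : φ.degree ≤ k → φ.noDollar → Rcl k φ
    | and {k : ℕ} {φ ψ : Formula} : Rcl k φ → Rcl k ψ → Rcl k (φ.and ψ)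
    | or {k : ℕ} {φ ψ : Formula} : Rcl k φ → Rcl k ψ → Rcl k (φ.or ψ)
    | all {k : ℕ} {φ : Formula} : Rcl k φ → Rcl k φ.all
    | imp {k : ℕ} {φ ψ : Formula} : Jcl k φ → Rcl k ψ → Rcl k (φ.imp ψ)
  /-- The class `𝒥_{k+1}` (index `k` denotes `𝒥_{k+1}`). -/
  inductive Jcl : ℕ → Formula → Prop
    | base {k : ℕ} {φ : Formula} : φ.degree ≤ k → φ.noDollar → Jcl k φ
    | and {k : ℕ} {φ ψ : Formula} : Jcl k φ → Jcl k ψ → Jcl k (φ.and ψ)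
    | or {k : ℕ} {φ ψ : Formula} : Jcl k φ → Jcl k ψ → Jcl k (φ.or ψ)
    | ex {k : ℕ} {φ : Formula} : Jcl k φ → Jcl k φ.ex
    | imp {k : ℕ} {φ ψ : Formula} : Rcl k φ → Jcl k ψ → Jcl k (φ.imp ψ)
end

/-- The class `𝒬_{k+1}` (index `k` denotes `𝒬_{k+1}`): generated from prime formulas by
`∧, ∨, ∀, ∃` and implications `J → Q` with `J ∈ 𝒥_{k+1}`. -/
inductive Qcl : ℕ → Formula → Prop
  | falsum {k : ℕ} : Qcl k Formula.falsum
  | eq {k : ℕ} {t u : Term} : Qcl k (Formula.eq t u)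
  | and {k : ℕ} {φ ψ : Formula} : Qcl k φ → Qcl k ψ → Qcl k (φ.and ψ)
  | or {k : ℕ} {φ ψ : Formula} : Qcl k φ → Qcl k ψ → Qcl k (φ.or ψ)
  | all {k : ℕ} {φ : Formula} : Qcl k φ → Qcl k φ.all
  | ex {k : ℕ} {φ : Formula} : Qcl k φ → Qcl k φ.ex
  | imp {k : ℕ} {φ ψ : Formula} : Jcl k φ → Qcl k ψ → Qcl k (φ.imp ψ)

/-- The class `𝒱_{k+1}` (index `k` denotes `𝒱_{k+1}`): generated from `𝒥_{k+1}` by `∧, ∀`. -/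
inductive Vcl : ℕ → Formula → Prop
  | ofJ {k : ℕ} {φ : Formula} : Jcl k φ → Vcl k φ
  | and {k : ℕ} {φ ψ : Formula} : Vcl k φ → Vcl k ψ → Vcl k (φ.and ψ)
  | all {k : ℕ} {φ : Formula} : Vcl k φ → Vcl k φ.all

/-- The class `EΠ_k`: generated from `Π_k` formulas by `∨` and `∀`. -/
inductive EPi (k : ℕ) : Formula → Prop
  | ofPi {φ : Formula} : IsPi k φ → EPi k φ
  | or {φ ψ : Formula} : EPi k φ → EPi k ψ → EPi k (φ.or ψ)
  | all {φ : Formula} : EPi k φ → EPi k φ.all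

/-- The class `EΣ_{k+1}` (index `k` denotes `EΣ_{k+1}`): existential quantifications
of `EΠ_k` formulas. -/
inductive ESig (k : ℕ) : Formula → Prop
  | ofEPi {φ : Formula} : EPi k φ → ESig k φ
  | ex {φ : Formula} : ESig k φ → ESig k φ.ex

/-- The scheme `Γ-DNEC`: universal closure of `¬¬φ` implies universal closure of `φ`. -/
def dnecSet (Γ : Set Formula) : Set Formula :=
  {ψ | ∃ φ ∈ Γ, ψ = (φ.neg.neg.univClosure).imp φ.univClosure}

/-- The scheme `Γ-DNSC`: universal closure of `¬¬φ` implies `¬¬` of the universal closure. -/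
def dnscSet (Γ : Set Formula) : Set Formula :=
  {ψ | ∃ φ ∈ Γ, ψ = (φ.neg.neg.univClosure).imp φ.univClosure.neg.neg}

/-- Double-negation elimination for sentences in `Γ`. -/
def dneSentSet (Γ : Set Formula) : Set Formula :=
  {ψ | ∃ φ ∈ Γ, φ.sentence ∧ ψ = φ.neg.neg.imp φ}


/-!
Write `φ⊥` for the prenex dual of `φ`; intuitionistically `φ⊥ → ¬φ`. By induction on `m ≤ k`
we show that `T` proves `φ ∨ φ⊥` for every `φ ∈ Σ_m ∪ Π_m`. Given this at level `m`, the
disjunction of a `Σ_{m+1}` and a `Π_{m+1}` formula is `T`-equivalent to a `Σ_{m+2}` formula: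
existential quantifiers move out of a disjunction intuitionistically, and universal ones move
out past a decidable disjunct, which level `m` supplies. For `φ ∈ Σ_{m+1}` level `m` also gives
`¬φ → φ⊥`, so `T ⊢ ¬¬(φ ∨ φ⊥)`, and the DNE rule applied to the `Σ_{m+2}` form of `φ ∨ φ⊥`
yields `φ ∨ φ⊥` itself; `Π_{m+1}` formulas are handled through `φ⊥ ∨ φ`.
-/

namespace Term

theorem subst_lift (s t : Term) (j : ℕ) : Term.subst j s (t.lift j) = t := by
  induction t generalizing j with
  | var n =>
    by_cases h : n < j
    · simp [lift, subst, h]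
    · simp [lift, subst, h, show ¬n + 1 < j by omega, show n + 1 ≠ j by omega]
  | func c a ts ih => simp [lift, subst, ih]

theorem subst_var_lift_succ (t : Term) (k : ℕ) : Term.subst k (var k) (t.lift (k + 1)) = t := by
  induction t generalizing k with
  | var n =>
    rcases lt_trichotomy n k with h | rfl | h
    · simp [lift, subst, h, show n < k + 1 by omega]
    · simp [lift, subst]
    · simp [lift, subst, show ¬n < k + 1 by omega, show ¬n + 1 < k by omega,
        show n + 1 ≠ k by omega]
  | func c a ts ih => simp [lift, subst, ih]

end Term

namespace Formula

theorem subst_lift (s : Term) (φ : Formula) (j : ℕ) : (φ.lift j).subst j s = φ := by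
  induction φ generalizing j s <;> simp_all [lift, subst, Term.subst_lift]

theorem subst_var_lift_succ (φ : Formula) (k : ℕ) : (φ.lift (k + 1)).subst k (.var k) = φ := by
  induction φ generalizing k <;> simp_all [lift, subst, Term.lift, Term.subst_var_lift_succ]

theorem isQF.lift {φ : Formula} (h : φ.isQF) (d : ℕ) : (φ.lift d).isQF := by
  induction φ generalizing d <;> simp_all [isQF, Formula.lift]

theorem dual_of_isQF {φ : Formula} (h : φ.isQF) : φ.dual = φ.neg := by
  cases φ <;> first | rfl | exact h.elim

end Formula

mutual

theorem IsSigma.lift {n : ℕ} {φ : Formula} : IsSigma n φ → ∀ d, IsSigma n (φ.lift d)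
  | .qf h, d => .qf (h.lift d)
  | .ofPi h, d => .ofPi (h.lift d)
  | .ex h, d => .ex (h.lift (d + 1))

theorem IsPi.lift {n : ℕ} {φ : Formula} : IsPi n φ → ∀ d, IsPi n (φ.lift d)
  | .qf h, d => .qf (h.lift d)
  | .ofSigma h, d => .ofSigma (h.lift d)
  | .all h, d => .all (h.lift (d + 1))

end

mutual

theorem IsSigma.succ {n : ℕ} {φ : Formula} : IsSigma n φ → IsSigma (n + 1) φ
  | .qf h => .ofPi (.qf h)
  | .ofPi h => .ofPi h.succ
  | .ex h => .ex h.succ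

theorem IsPi.succ {n : ℕ} {φ : Formula} : IsPi n φ → IsPi (n + 1) φ
  | .qf h => .ofSigma (.qf h)
  | .ofSigma h => .ofSigma h.succ
  | .all h => .all h.succ

end

mutual

theorem IsSigma.dual {n : ℕ} {φ : Formula} : IsSigma n φ → IsPi n φ.dual
  | .qf h => Formula.dual_of_isQF h ▸ .qf ⟨h, trivial⟩
  | .ofPi h => .ofSigma h.dual
  | .ex h => .all h.dual

theorem IsPi.dual {n : ℕ} {φ : Formula} : IsPi n φ → IsSigma n φ.dual
  | .qf h => Formula.dual_of_isQF h ▸ .qf ⟨h, trivial⟩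
  | .ofSigma h => .ofPi h.dual
  | .all h => .ex h.dual

end

theorem IsSigma.isQF {φ : Formula} (h : IsSigma 0 φ) : φ.isQF := by
  cases h; assumption

theorem IsPi.isQF {φ : Formula} (h : IsPi 0 φ) : φ.isQF := by
  cases h; assumption

theorem IsSigma.succ_induction {n : ℕ} {motive : (φ : Formula) → IsSigma (n + 1) φ → Prop}
    (ofPi : ∀ φ (h : IsPi n φ), motive φ (.ofPi h))
    (ex : ∀ φ (h : IsSigma (n + 1) φ), motive φ h → motive φ.ex (.ex h))
    {φ : Formula} (h : IsSigma (n + 1) φ) : motive φ h := by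
  induction φ with
  | ex φ ih =>
    cases h with
    | ofPi h => exact ofPi _ h
    | ex h => exact ex _ h (ih h)
  | _ => cases h with | ofPi h => exact ofPi _ h

theorem IsPi.succ_induction {n : ℕ} {motive : (φ : Formula) → IsPi (n + 1) φ → Prop}
    (ofSigma : ∀ φ (h : IsSigma n φ), motive φ (.ofSigma h))
    (all : ∀ φ (h : IsPi (n + 1) φ), motive φ h → motive φ.all (.all h))
    {φ : Formula} (h : IsPi (n + 1) φ) : motive φ h := by
  induction φ with
  | all φ ih =>
    cases h with
    | ofSigma h => exact ofSigma _ h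
    | all h => exact all _ h (ih h)
  | _ => cases h with | ofSigma h => exact ofSigma _ h

/-- Derivations from `T` and a list of hypotheses, without generalization, so that the
deduction theorem holds. -/
inductive ProvesFrom (T : Set Formula) (Γ : List Formula) : Formula → Prop
  | hyp {φ : Formula} : φ ∈ Γ → ProvesFrom T Γ φ
  | thm {φ : Formula} : Proves T φ → ProvesFrom T Γ φ
  | mp {φ ψ : Formula} : ProvesFrom T Γ (φ.imp ψ) → ProvesFrom T Γ φ → ProvesFrom T Γ ψ

section Logic

variable {T : Set Formula} {A B C A' B' : Formula}

theorem Proves.imp_refl (A : Formula) : Proves T (A.imp A) :=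
  .mp (.mp (.ha (.axS A (A.imp A) A)) (.ha (.axK A (A.imp A)))) (.ha (.axK A A))

namespace ProvesFrom

variable {Γ : List Formula}

theorem hyp₀ : ProvesFrom T (A :: Γ) A := .hyp List.mem_cons_self

theorem hyp₁ : ProvesFrom T (B :: A :: Γ) A := .hyp (List.mem_cons_of_mem _ List.mem_cons_self)

theorem deduction (h : ProvesFrom T (A :: Γ) B) : ProvesFrom T Γ (A.imp B) := by
  induction h with
  | hyp h =>
    rcases List.mem_cons.1 h with rfl | h
    · exact .thm (.imp_refl _)
    · exact .mp (.thm (.ha (.axK _ _))) (.hyp h)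
  | thm h => exact .mp (.thm (.ha (.axK _ _))) (.thm h)
  | mp _ _ ih₁ ih₂ => exact .mp (.mp (.thm (.ha (.axS _ _ _))) ih₁) ih₂

theorem proves {φ : Formula} (h : ProvesFrom T [] φ) : Proves T φ := by
  induction h with
  | hyp h => simp at h
  | thm h => exact h
  | mp _ _ ih₁ ih₂ => exact .mp ih₁ ih₂

end ProvesFrom

namespace Proves

theorem of_provesFrom₁ (h : ProvesFrom T [A] B) : Proves T (A.imp B) := h.deduction.proves

theorem of_provesFrom₂ (h : ProvesFrom T [B, A] C) : Proves T (A.imp (B.imp C)) :=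
  h.deduction.deduction.proves

theorem imp_trans (h₁ : Proves T (A.imp B)) (h₂ : Proves T (B.imp C)) : Proves T (A.imp C) :=
  of_provesFrom₁ (.mp (.thm h₂) (.mp (.thm h₁) .hyp₀))

theorem or_elim (h₁ : Proves T (A.imp C)) (h₂ : Proves T (B.imp C)) :
    Proves T ((A.or B).imp C) :=
  .mp (.mp (.ha (.orE A B C)) h₁) h₂

theorem or_swap (A B : Formula) : Proves T ((A.or B).imp (B.or A)) :=
  or_elim (.ha (.orI2 B A)) (.ha (.orI1 B A))

theorem or_mono (h₁ : Proves T (A.imp A')) (h₂ : Proves T (B.imp B')) :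
    Proves T ((A.or B).imp (A'.or B')) :=
  or_elim (imp_trans h₁ (.ha (.orI1 _ _))) (imp_trans h₂ (.ha (.orI2 _ _)))

theorem contrapos (h : Proves T (A.imp B)) : Proves T (B.neg.imp A.neg) :=
  of_provesFrom₂ (.mp .hyp₁ (.mp (.thm h) .hyp₀))

theorem neg_neg_mono (h : Proves T (A.imp B)) : Proves T (A.neg.neg.imp B.neg.neg) :=
  contrapos (contrapos h)

theorem imp_neg_comm (h : Proves T (A.imp B.neg)) : Proves T (B.imp A.neg) :=
  of_provesFrom₂ (.mp (.mp (.thm h) .hyp₀) .hyp₁)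

theorem neg_imp_of_or (h : Proves T (A.or B)) : Proves T (A.neg.imp B) :=
  .mp (or_elim (of_provesFrom₂ (.mp (.thm (.ha (.efq B))) (.mp .hyp₀ .hyp₁)))
    (.ha (.axK B A.neg))) h

theorem neg_imp_or_imp (A B : Formula) : Proves T (B.neg.imp ((A.or B).imp A)) :=
  of_provesFrom₁ (.mp (.mp (.thm (.ha (.orE A B A))) (.thm (imp_refl A)))
    (.deduction (.mp (.thm (.ha (.efq A))) (.mp .hyp₁ .hyp₀))))

theorem neg_neg_or_of_neg_imp (h : Proves T (A.neg.imp B)) : Proves T (A.or B).neg.neg :=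
  of_provesFrom₁ (.mp .hyp₀ (.mp (.thm (.ha (.orI2 A B))) (.mp (.thm h)
    (.deduction (.mp .hyp₁ (.mp (.thm (.ha (.orI1 A B))) .hyp₀))))))

theorem all_mono (h : Proves T (A.imp B)) : Proves T (A.all.imp B.all) :=
  .mp (.ha (.allK A B)) (.gen h)

theorem imp_all_of_lift (h : Proves T ((A.lift 0).imp B)) : Proves T (A.imp B.all) :=
  imp_trans (.ha (.allVac A)) (all_mono h)

theorem ex_imp_of_lift (h : Proves T (A.imp (B.lift 0))) : Proves T (A.ex.imp B) :=
  .mp (.ha (.exE A B)) (.gen h)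

theorem all_lift_imp (A : Formula) : Proves T ((A.lift 1).all.imp A) := by
  simpa only [Formula.subst_var_lift_succ] using Proves.ha (T := T) (.allE (A.lift 1) (.var 0))

theorem imp_ex_lift (A : Formula) : Proves T (A.imp (A.lift 1).ex) := by
  simpa only [Formula.subst_var_lift_succ] using Proves.ha (T := T) (.exI (A.lift 1) (.var 0))

theorem ex_mono (h : Proves T (A.imp B)) : Proves T (A.ex.imp B.ex) :=
  ex_imp_of_lift (imp_trans h (imp_ex_lift B))

theorem neg_ex_imp_all_neg (A : Formula) : Proves T (A.ex.neg.imp A.neg.all) :=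
  imp_all_of_lift (contrapos (imp_ex_lift A))

theorem imp_all_imp_all (h : Proves T ((A.lift 0).imp (B.imp C))) :
    Proves T (A.imp (B.all.imp C.all)) :=
  imp_trans (imp_all_of_lift h) (.ha (.allK B C))

theorem dual_imp_neg (φ : Formula) : Proves T (φ.dual.imp φ.neg) := by
  induction φ with
  | all ψ ih => exact ex_imp_of_lift (imp_trans ih (contrapos (all_lift_imp ψ)))
  | ex ψ ih => exact imp_neg_comm (ex_imp_of_lift (imp_neg_comm (imp_trans (all_lift_imp _) ih)))
  | _ => exact imp_refl _

end Proves

end Logic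

def ProvEquiv (T : Set Formula) (A B : Formula) : Prop :=
  Proves T (A.imp B) ∧ Proves T (B.imp A)

namespace ProvEquiv

open Proves

variable {T : Set Formula} {A B C : Formula}

theorem refl (A : Formula) : ProvEquiv T A A := ⟨imp_refl A, imp_refl A⟩

theorem symm (h : ProvEquiv T A B) : ProvEquiv T B A := ⟨h.2, h.1⟩

theorem trans (h₁ : ProvEquiv T A B) (h₂ : ProvEquiv T B C) : ProvEquiv T A C :=
  ⟨imp_trans h₁.1 h₂.1, imp_trans h₂.2 h₁.2⟩

theorem or_comm (A B : Formula) : ProvEquiv T (A.or B) (B.or A) := ⟨or_swap A B, or_swap B A⟩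

theorem ex_congr (h : ProvEquiv T A B) : ProvEquiv T A.ex B.ex := ⟨ex_mono h.1, ex_mono h.2⟩

theorem all_congr (h : ProvEquiv T A B) : ProvEquiv T A.all B.all :=
  ⟨all_mono h.1, all_mono h.2⟩

theorem ex_or (A B : Formula) : ProvEquiv T (A.ex.or B) (A.or (B.lift 0)).ex := by
  have hB : Proves T (B.imp (A.or (B.lift 0)).ex) := by
    have h := Proves.ha (T := T) (.exI (A.or (B.lift 0)) (.var 0))
    simp only [Formula.subst, Formula.subst_lift] at h
    exact imp_trans (.ha (.orI2 _ _)) h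
  exact ⟨or_elim (ex_mono (.ha (.orI1 _ _))) hB,
    ex_imp_of_lift (or_mono (imp_ex_lift A) (imp_refl _))⟩

theorem all_or (A : Formula) (hB : Proves T (B.or B.neg)) :
    ProvEquiv T (A.all.or B) (A.or (B.lift 0)).all := by
  have hpos : Proves T (B.imp ((A.or (B.lift 0)).all.imp (A.all.or B))) :=
    of_provesFrom₂ (.mp (.thm (.ha (.orI2 _ _))) .hyp₁)
  have hneg : Proves T (B.neg.imp ((A.or (B.lift 0)).all.imp (A.all.or B))) :=
    of_provesFrom₂ (.mp (.thm (.ha (.orI1 _ _)))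
      (.mp (.mp (.thm (imp_all_imp_all (neg_imp_or_imp A (B.lift 0)))) .hyp₁) .hyp₀))
  exact ⟨or_elim (all_mono (.ha (.orI1 _ _))) (imp_all_of_lift (.ha (.orI2 _ _))),
    .mp (or_elim hpos hneg) hB⟩

end ProvEquiv

def ProvEquivIn (T : Set Formula) (R : Formula → Prop) (φ : Formula) : Prop :=
  ∃ C, R C ∧ ProvEquiv T C φ

namespace ProvEquivIn

variable {T : Set Formula} {R R' Q : Formula → Prop} {n : ℕ} {A B : Formula}

theorem of_mem (h : R A) : ProvEquivIn T R A := ⟨A, h, .refl A⟩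

theorem mono (hR : ∀ C, R C → R' C) : ProvEquivIn T R A → ProvEquivIn T R' A
  | ⟨C, hC, e⟩ => ⟨C, hR C hC, e⟩

theorem or_comm : ProvEquivIn T R (A.or B) → ProvEquivIn T R (B.or A)
  | ⟨C, hC, e⟩ => ⟨C, hC, e.trans (.or_comm A B)⟩

theorem or_of_isSigma_left (hR : ∀ C, R C → R C.ex) (hQ : ∀ B, Q B → Q (B.lift 0))
    (h : ∀ A B, IsPi n A → Q B → ProvEquivIn T R (A.or B))
    (hA : IsSigma (n + 1) A) (hB : Q B) : ProvEquivIn T R (A.or B) := by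
  induction hA using IsSigma.succ_induction generalizing B with
  | ofPi A hA => exact h A B hA hB
  | ex A _ ih =>
    obtain ⟨C, hC, e⟩ := ih (hQ B hB)
    exact ⟨C.ex, hR C hC, e.ex_congr.trans (.symm (.ex_or A B))⟩

theorem or_of_isPi_left (hR : ∀ C, R C → R C.all) (hQ : ∀ B, Q B → Q (B.lift 0))
    (hdec : ∀ B, Q B → Proves T (B.or B.neg))
    (h : ∀ A B, IsSigma n A → Q B → ProvEquivIn T R (A.or B))
    (hA : IsPi (n + 1) A) (hB : Q B) : ProvEquivIn T R (A.or B) := by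
  induction hA using IsPi.succ_induction generalizing B with
  | ofSigma A hA => exact h A B hA hB
  | all A _ ih =>
    obtain ⟨C, hC, e⟩ := ih (hQ B hB)
    exact ⟨C.all, hR C hC, e.all_congr.trans (.symm (.all_or A (hdec B hB)))⟩

end ProvEquivIn

def ProvesEM (T : Set Formula) (n : ℕ) : Prop :=
  ∀ φ, IsSigma n φ ∨ IsPi n φ → Proves T (φ.or φ.neg)

def ProvesDualEM (T : Set Formula) (n : ℕ) : Prop :=
  ∀ φ, IsSigma n φ ∨ IsPi n φ → Proves T (φ.or φ.dual)

def DNERule (T : Set Formula) (n : ℕ) : Prop :=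
  ∀ φ, IsSigma n φ → Proves T φ.neg.neg → Proves T φ

section Main

open Proves

variable {T : Set Formula} {n m : ℕ}

theorem ProvesEM.of_succ (h : ProvesEM T (n + 1)) : ProvesEM T n :=
  fun φ hφ => h φ (hφ.imp IsSigma.succ IsPi.succ)

theorem ProvesDualEM.provesEM (h : ProvesDualEM T n) : ProvesEM T n :=
  fun φ hφ => .mp (or_mono (imp_refl φ) (dual_imp_neg φ)) (h φ hφ)

theorem DNERule.of_succ (h : DNERule T (n + 1)) : DNERule T n :=
  fun φ hφ => h φ hφ.succ

theorem DNERule.proves (hdne : DNERule T n) {ψ : Formula}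
    (h : ProvEquivIn T (IsSigma n) ψ) (hnn : Proves T ψ.neg.neg) : Proves T ψ :=
  let ⟨χ, hχ, e⟩ := h
  .mp e.1 (hdne χ hχ (.mp (neg_neg_mono e.2) hnn))

theorem provEquivIn_sigma_or_succ (hEM : ProvesEM T n)
    (hP : ∀ A B, IsPi n A → IsSigma n B → ProvEquivIn T (IsPi (n + 1)) (A.or B))
    {A B : Formula} (hA : IsSigma (n + 1) A) (hB : IsPi (n + 1) B) :
    ProvEquivIn T (IsSigma (n + 2)) (A.or B) := by
  have hPi : ∀ A B, IsPi n A → IsPi (n + 1) B → ProvEquivIn T (IsSigma (n + 2)) (A.or B) :=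
    fun A B hA hB => .mono (fun _ => .ofPi) <| .or_comm <|
      .or_of_isPi_left (fun _ => .all) (fun _ h => h.lift 0) (fun B h => hEM B (.inr h))
        (fun B A hB hA => (hP A B hA hB).or_comm) hB hA
  exact .or_of_isSigma_left (fun _ => .ex) (fun _ h => h.lift 0) hPi hA hB

theorem provEquivIn_pi_or_succ (hEM : ProvesEM T (n + 1))
    (hS : ∀ A B, IsSigma n A → IsPi n B → ProvEquivIn T (IsSigma (n + 1)) (A.or B))
    {A B : Formula} (hA : IsPi (n + 1) A) (hB : IsSigma (n + 1) B) :
    ProvEquivIn T (IsPi (n + 2)) (A.or B) := by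
  have hSigma : ∀ A B, IsSigma n A → IsSigma (n + 1) B →
      ProvEquivIn T (IsPi (n + 2)) (A.or B) :=
    fun A B hA hB => .mono (fun _ => .ofSigma) <| .or_comm <|
      .or_of_isSigma_left (fun _ => .ex) (fun _ h => h.lift 0)
        (fun B A hB hA => (hS A B hA hB).or_comm) hB hA
  exact .or_of_isPi_left (fun _ => .all) (fun _ h => h.lift 0) (fun B h => hEM B (.inl h))
    hSigma hA hB

theorem provEquivIn_or (hEM : ProvesEM T n) :
    (∀ A B, IsPi n A → IsSigma n B → ProvEquivIn T (IsPi (n + 1)) (A.or B)) ∧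
    (∀ A B, IsSigma n A → IsPi n B → ProvEquivIn T (IsSigma (n + 1)) (A.or B)) := by
  induction n with
  | zero =>
    exact ⟨fun _ _ hA hB => .of_mem (.ofSigma (.qf ⟨hA.isQF, hB.isQF⟩)),
      fun _ _ hA hB => .of_mem (.ofPi (.qf ⟨hA.isQF, hB.isQF⟩))⟩
  | succ n ih =>
    obtain ⟨hP, hS⟩ := ih hEM.of_succ
    exact ⟨fun _ _ => provEquivIn_pi_or_succ hEM hS,
      fun _ _ => provEquivIn_sigma_or_succ hEM.of_succ hP⟩

theorem ProvesDualEM.neg_imp_dual (hD : ProvesDualEM T m) {φ : Formula}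
    (hφ : IsSigma (m + 1) φ) : Proves T (φ.neg.imp φ.dual) := by
  induction hφ using IsSigma.succ_induction with
  | ofPi φ hφ => exact neg_imp_of_or (hD φ (.inr hφ))
  | ex φ _ ih => exact imp_trans (neg_ex_imp_all_neg φ) (all_mono ih)

theorem ProvesDualEM.neg_dual_imp (hD : ProvesDualEM T m) {φ : Formula}
    (hφ : IsPi (m + 1) φ) : Proves T (φ.dual.neg.imp φ) := by
  induction hφ using IsPi.succ_induction with
  | ofSigma φ hφ => exact neg_imp_of_or (.mp (or_swap _ _) (hD φ (.inl hφ)))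
  | all φ _ ih => exact imp_trans (neg_ex_imp_all_neg φ.dual) (all_mono ih)

theorem provesDualEM_zero (hdne : DNERule T 1) : ProvesDualEM T 0 := by
  intro φ hφ
  have hqf : φ.isQF := hφ.elim IsSigma.isQF IsPi.isQF
  rw [Formula.dual_of_isQF hqf]
  exact hdne _ (.ofPi (.qf ⟨hqf, hqf, trivial⟩)) (neg_neg_or_of_neg_imp (imp_refl _))

theorem ProvesDualEM.succ (hdne : DNERule T (m + 2)) (hD : ProvesDualEM T m) :
    ProvesDualEM T (m + 1) := by
  have hS {A B : Formula} (hA : IsSigma (m + 1) A) (hB : IsPi (m + 1) B) :=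
    provEquivIn_sigma_or_succ hD.provesEM (provEquivIn_or hD.provesEM).1 hA hB
  rintro φ (hφ | hφ)
  · exact hdne.proves (hS hφ hφ.dual) (neg_neg_or_of_neg_imp (hD.neg_imp_dual hφ))
  · exact .mp (or_swap _ _)
      (hdne.proves (hS hφ.dual hφ) (neg_neg_or_of_neg_imp (hD.neg_dual_imp hφ)))

theorem provesDualEM_of_dneRule : ∀ k, DNERule T (k + 1) → ProvesDualEM T k
  | 0, hdne => provesDualEM_zero hdne
  | k + 1, hdne => (provesDualEM_of_dneRule k hdne.of_succ).succ hdne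

end Main

/-- if `T` (containing `HA`) is closed under `Σ_{k+1}-DNE-R`,
then `T ⊢ Σ_k-LEM`. -/
theorem sigLEM_of_dneRule (k : ℕ) (T : Set Formula)
    (hdne : ∀ φ : Formula, IsSigma (k + 1) φ → Proves T φ.neg.neg → Proves T φ) :
    ∀ φ : Formula, IsSigma k φ → Proves T (φ.or φ.neg) :=
  fun φ hφ => (provesDualEM_of_dneRule k hdne).provesEM φ (.inl hφ)

end SemiClassicalArith
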